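/- Equilibrium time-reversal symmetry of loop-erased path probabilities: if G is a finite strongly connected reversible graph satisfying the cycle condition, then for every minimal path Γ ∈ M(i,j), Pr(Γ) = Pr(Γ̂), where Pr(Γ) = ∑_{T ∈ Θ_j, T_i = Γ} q(T)/q(Θ_j) and Pr(Γ̂) = ∑_{T' ∈ Θ_i, T'_j = Γ̂} q(T')/q(Θ_i). -/

import Mathlib

open Finset

attribute [local instance] Classical.propDecidable

/-- `i → j` is an edge of the graph when its label is positive. -/
def IsEdge {n : ℕ} (ℓ : Fin n → Fin n → ℝ) (i j : Fin n) : Prop := 0 < ℓ i j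

/-- Strong connectivity: any two vertices are joined by a directed path of edges. -/
def StronglyConnected {n : ℕ} (ℓ : Fin n → Fin n → ℝ) : Prop :=
  ∀ i j : Fin n, Relation.ReflTransGen (IsEdge ℓ) i j

/-- Reversibility: `i → j` is an edge iff `j → i` is. -/
def Reversible {n : ℕ} (ℓ : Fin n → Fin n → ℝ) : Prop :=
  ∀ i j : Fin n, 0 < ℓ i j ↔ 0 < ℓ j i

/-- The Laplacian matrix: `L j i = ℓ i j` off the diagonal,
`L i i = -∑_{k ≠ i} ℓ i k`. -/
noncomputable def LaplacianMatrix {n : ℕ} (ℓ : Fin n → Fin n → ℝ) :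
    Matrix (Fin n) (Fin n) ℝ :=
  fun j i => if j = i then -∑ k ∈ univ.filter (· ≠ i), ℓ i k else ℓ i j

/-- A spanning tree rooted at `r`, encoded as a parent map `t`: the root is fixed,
every other vertex has a positively-labelled edge to its parent, and iterating
the parent map from any vertex reaches the root. -/
def IsSpanningTree {n : ℕ} (ℓ : Fin n → Fin n → ℝ) (r : Fin n)
    (t : Fin n → Fin n) : Prop :=
  t r = r ∧ (∀ v, v ≠ r → 0 < ℓ v (t v)) ∧ ∀ v, ∃ k, t^[k] v = r

/-- `Θ_r`: the set of spanning trees rooted at `r`. -/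
noncomputable def Trees {n : ℕ} (ℓ : Fin n → Fin n → ℝ) (r : Fin n) :
    Finset (Fin n → Fin n) :=
  univ.filter (IsSpanningTree ℓ r)

/-- `q(T)`: the product of the edge labels over the edges of the tree. -/
noncomputable def treeWeight {n : ℕ} (ℓ : Fin n → Fin n → ℝ) (r : Fin n)
    (t : Fin n → Fin n) : ℝ :=
  ∏ v ∈ univ.filter (· ≠ r), ℓ v (t v)

/-- A directed path from `i` to `j`, as the list of visited vertices. -/
def IsPathFrom {n : ℕ} (ℓ : Fin n → Fin n → ℝ) (i j : Fin n)
    (p : List (Fin n)) : Prop :=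
  p.Chain' (IsEdge ℓ) ∧ p.head? = some i ∧ p.getLast? = some j

/-- A minimal (self-avoiding) path from `i` to `j`: all vertices distinct. -/
def IsMinPathFrom {n : ℕ} (ℓ : Fin n → Fin n → ℝ) (i j : Fin n)
    (p : List (Fin n)) : Prop :=
  IsPathFrom ℓ i j p ∧ p.Nodup

/-- `S(P)`: the action / entropy change of a path, the sum of
`log (ℓ(a→b)/ℓ(b→a))` over its consecutive pairs `a → b`. -/
noncomputable def pathAction {n : ℕ} (ℓ : Fin n → Fin n → ℝ)
    (p : List (Fin n)) : ℝ :=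
  ((p.zip p.tail).map (fun e => Real.log (ℓ e.1 e.2 / ℓ e.2 e.1))).sum

/-- `q(P)`: the product of the labels over the edges of a path. -/
noncomputable def pathWeight {n : ℕ} (ℓ : Fin n → Fin n → ℝ)
    (p : List (Fin n)) : ℝ :=
  ((p.zip p.tail).map (fun e => ℓ e.1 e.2)).prod

/-- The path from `i` to the root `r` along the parent map `t` (fuel `k`). -/
def treePathAux {n : ℕ} (t : Fin n → Fin n) (r : Fin n) :
    ℕ → Fin n → List (Fin n)
  | 0, i => [i]
  | k + 1, i => if i = r then [i] else i :: treePathAux t r k (t i)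

/-- `T_i`: the unique path from `i` to the root `r` on the spanning tree `t`. -/
def treePath {n : ℕ} (t : Fin n → Fin n) (r : Fin n) (i : Fin n) :
    List (Fin n) :=
  treePathAux t r n i

/-- The cycle condition: `S(C) = 0` for every directed cycle `C`
(a directed path whose first and last vertices agree). -/
def CycleCondition {n : ℕ} (ℓ : Fin n → Fin n → ℝ) : Prop :=
  ∀ p : List (Fin n), p.Chain' (IsEdge ℓ) → p.head? = p.getLast? →
    pathAction ℓ p = 0

/-- The tree-reversal map `Φ_{r,j}`: given a tree `t` rooted at `r`, reverse the
edges on the unique tree path from `j` to `r`, obtaining a tree rooted at `j`. -/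
def reverseTree {n : ℕ} (t : Fin n → Fin n) (r j : Fin n) : Fin n → Fin n :=
  fun v =>
    (((treePath t r j).zip (treePath t r j).tail).find? (fun e => e.2 == v)).elim
      (if v = j then j else t v) (fun e => e.1)

/-! Reversing the edges of a tree `T ∈ Θ_j` along its path `T_i` gives a tree in `Θ_i`
whose path to `j` is the reversal of `T_i`; doing it again along that path gives back `T`,
so this is a bijection `Θ_j ≃ Θ_i` matching `{T_i = Γ}` with `{T'_j = Γ̂}`. It multiplies
the weight of every tree by `q(T̂_i) / q(T_i) = exp (-S(T_i))`. The cycle condition, applied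
to `T_i` followed by `Γ̂`, gives `S(T_i) = S(Γ)`, so this factor is the constant
`q(Γ̂) / q(Γ)`, and it cancels in the ratio of the sums. -/

namespace List

variable {α : Type*}

theorem zip_tail_append_tail {l m : List α} (h : l.getLast? = m.head?) :
    (l ++ m.tail).zip (l ++ m.tail).tail = l.zip l.tail ++ m.zip m.tail := by
  induction l with
  | nil => cases m <;> simp_all
  | cons a l ih =>
    cases l with
    | nil => cases m <;> simp_all
    | cons b l => simp_all

theorem reverse_cons_cons (a b : α) (l : List α) :
    (a :: b :: l).reverse = (b :: l).reverse ++ [b, a].tail := by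
  simp

section Iterate

variable (f : α → α)

theorem getLast?_iterate_succ (a : α) (m : ℕ) :
    (iterate f a (m + 1)).getLast? = some (f^[m] a) := by
  induction m generalizing a with
  | zero => rfl
  | succ m ih => rw [iterate, getLast?_cons, ih]; rfl

theorem isChain_iterate_succ {R : α → α → Prop} {a : α} {m : ℕ}
    (h : ∀ k < m, R (f^[k] a) (f^[k + 1] a)) : (iterate f a (m + 1)).IsChain R := by
  induction m generalizing a with
  | zero => exact .singleton a
  | succ m ih =>
    exact isChain_cons_cons.2 ⟨h 0 m.succ_pos, ih fun k hk => h (k + 1) (by omega)⟩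

theorem zip_tail_iterate_succ (a : α) (m : ℕ) :
    (iterate f a (m + 1)).zip (iterate f a (m + 1)).tail =
      (range m).map fun k => (f^[k] a, f^[k + 1] a) := by
  induction m generalizing a with
  | zero => rfl
  | succ m ih =>
    rw [range_succ_eq_map, map_cons, map_map]
    exact congrArg _ (ih (f a))

end Iterate

theorem find?_eq_some_of_unique {p : α → Bool} {l : List α} {a : α} (ha : a ∈ l)
    (hpa : p a) (huniq : ∀ x ∈ l, p x → x = a) : l.find? p = some a := by
  induction l with
  | nil => simp at ha
  | cons b l ih =>
    by_cases hb : p b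
    · rw [find?_cons_of_pos hb, huniq b mem_cons_self hb]
    · rw [find?_cons_of_neg hb]
      have hab : a ≠ b := by rintro rfl; exact hb hpa
      exact ih ((mem_cons.1 ha).resolve_left hab) fun x hx => huniq x (mem_cons_of_mem _ hx)

end List

section Paths

variable {n : ℕ} (ℓ : Fin n → Fin n → ℝ)

@[simp]
theorem pathAction_cons_cons (a b : Fin n) (l : List (Fin n)) :
    pathAction ℓ (a :: b :: l) = Real.log (ℓ a b / ℓ b a) + pathAction ℓ (b :: l) := by
  simp [pathAction]

@[simp]
theorem pathWeight_cons_cons (a b : Fin n) (l : List (Fin n)) :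
    pathWeight ℓ (a :: b :: l) = ℓ a b * pathWeight ℓ (b :: l) := by
  simp [pathWeight]

@[simp]
theorem pathAction_singleton (a : Fin n) : pathAction ℓ [a] = 0 := by
  simp [pathAction]

@[simp]
theorem pathWeight_singleton (a : Fin n) : pathWeight ℓ [a] = 1 := by
  simp [pathWeight]

theorem pathAction_append_tail {p q : List (Fin n)} (h : p.getLast? = q.head?) :
    pathAction ℓ (p ++ q.tail) = pathAction ℓ p + pathAction ℓ q := by
  simp [pathAction, List.zip_tail_append_tail h]

theorem pathWeight_append_tail {p q : List (Fin n)} (h : p.getLast? = q.head?) :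
    pathWeight ℓ (p ++ q.tail) = pathWeight ℓ p * pathWeight ℓ q := by
  simp [pathWeight, List.zip_tail_append_tail h]

theorem pathAction_reverse (p : List (Fin n)) : pathAction ℓ p.reverse = -pathAction ℓ p := by
  induction p with
  | nil => simp [pathAction]
  | cons a l ih =>
    cases l with
    | nil => simp
    | cons b l =>
      rw [List.reverse_cons_cons, pathAction_append_tail ℓ (by simp), ih, pathAction_cons_cons,
        pathAction_cons_cons, pathAction_singleton, ← inv_div, Real.log_inv]
      ring

theorem pathWeight_reverse (p : List (Fin n)) :
    pathWeight ℓ p.reverse = pathWeight (fun a b => ℓ b a) p := by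
  induction p with
  | nil => simp [pathWeight]
  | cons a l ih =>
    cases l with
    | nil => simp
    | cons b l =>
      rw [List.reverse_cons_cons, pathWeight_append_tail ℓ (by simp), ih, pathWeight_cons_cons,
        pathWeight_cons_cons, pathWeight_singleton]
      ring

variable {ℓ}

theorem pathWeight_pos {p : List (Fin n)} (hp : p.IsChain (IsEdge ℓ)) : 0 < pathWeight ℓ p := by
  induction p with
  | nil => simp [pathWeight]
  | cons a l ih =>
    cases l with
    | nil => simp
    | cons b l =>
      rw [List.isChain_cons_cons] at hp
      rw [pathWeight_cons_cons]
      exact mul_pos hp.1 (ih hp.2)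

theorem isChain_reverse_of_reversible (hrev : Reversible ℓ) {p : List (Fin n)}
    (hp : p.IsChain (IsEdge ℓ)) : p.reverse.IsChain (IsEdge ℓ) :=
  List.isChain_reverse.2 (hp.imp fun a b h => (hrev a b).1 h)

theorem exp_pathAction_mul (hrev : Reversible ℓ) {p : List (Fin n)}
    (hp : p.IsChain (IsEdge ℓ)) :
    Real.exp (pathAction ℓ p) * pathWeight ℓ p.reverse = pathWeight ℓ p := by
  rw [pathWeight_reverse]
  induction p with
  | nil => simp [pathAction, pathWeight]
  | cons a l ih =>
    cases l with
    | nil => simp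
    | cons b l =>
      rw [List.isChain_cons_cons] at hp
      have hba : 0 < ℓ b a := (hrev a b).1 hp.1
      rw [pathAction_cons_cons, pathWeight_cons_cons, pathWeight_cons_cons, Real.exp_add,
        Real.exp_log (div_pos hp.1 hba), ← ih hp.2]
      field_simp

theorem pathAction_eq_of_cycleCondition (hrev : Reversible ℓ) (hcc : CycleCondition ℓ)
    {i j : Fin n} {p q : List (Fin n)} (hp : IsPathFrom ℓ i j p) (hq : IsPathFrom ℓ i j q) :
    pathAction ℓ p = pathAction ℓ q := by
  obtain ⟨hpc, hpi, hpj⟩ := hp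
  obtain ⟨hqc, hqi, hqj⟩ := hq
  have hjoin : p.getLast? = q.reverse.head? := by rw [List.head?_reverse, hpj, hqj]
  obtain ⟨q', hq'⟩ : ∃ q', q.reverse = j :: q' :=
    List.head?_eq_some_iff.1 (by rw [List.head?_reverse, hqj])
  have hchain : (p ++ q.reverse.tail).IsChain (IsEdge ℓ) := by
    have hrc := isChain_reverse_of_reversible hrev hqc
    rw [hq'] at hrc ⊢
    refine List.isChain_append.2 ⟨hpc, hrc.tail, ?_⟩
    simp only [hpj, Option.mem_def, Option.some.injEq]
    rintro x rfl y hy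
    exact (List.isChain_cons.1 hrc).1 y hy
  have hclosed : (p ++ q.reverse.tail).head? = (p ++ q.reverse.tail).getLast? := by
    rw [← List.reverse_reverse q, hq', List.head?_reverse, List.getLast?_cons] at hqi
    rw [hq', List.tail_cons, List.head?_append, hpi, List.getLast?_append, hpj]
    cases h : q'.getLast? <;> simp_all
  have hcyc := hcc _ hchain hclosed
  rw [pathAction_append_tail ℓ hjoin, pathAction_reverse] at hcyc
  linarith

theorem pathWeight_mul_pathWeight_reverse_comm (hrev : Reversible ℓ) (hcc : CycleCondition ℓ)
    {i j : Fin n} {p q : List (Fin n)} (hp : IsPathFrom ℓ i j p) (hq : IsPathFrom ℓ i j q) :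
    pathWeight ℓ p * pathWeight ℓ q.reverse = pathWeight ℓ q * pathWeight ℓ p.reverse := by
  have hpe := exp_pathAction_mul hrev hp.1
  have hqe := exp_pathAction_mul hrev hq.1
  rw [pathAction_eq_of_cycleCondition hrev hcc hp hq] at hpe
  linear_combination pathWeight ℓ p.reverse * hqe - pathWeight ℓ q.reverse * hpe

end Paths

section Depth

variable {α : Type*} {t : α → α} {r : α} (ht : ∀ v, ∃ k, t^[k] v = r)

noncomputable def depth (v : α) : ℕ := Nat.find (ht v)

theorem iterate_depth (v : α) : t^[depth ht v] v = r := Nat.find_spec (ht v)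

theorem iterate_ne_of_lt_depth {v : α} {k : ℕ} (hk : k < depth ht v) : t^[k] v ≠ r :=
  Nat.find_min (ht v) hk

theorem depth_eq_of_iterate {v : α} {m : ℕ} (hm : t^[m] v = r)
    (hmin : ∀ k < m, t^[k] v ≠ r) : depth ht v = m :=
  (Nat.find_eq_iff (ht v)).2 ⟨hm, hmin⟩

theorem depth_eq_zero_iff {v : α} : depth ht v = 0 ↔ v = r := Nat.find_eq_zero (ht v)

theorem depth_eq_depth_add_one {v : α} (hv : v ≠ r) : depth ht v = depth ht (t v) + 1 :=
  Nat.find_comp_succ (ht v) (ht (t v)) hv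

theorem iterate_inj_of_le_depth {v : α} {a b : ℕ} (ha : a ≤ depth ht v) (hb : b ≤ depth ht v)
    (hab : t^[a] v = t^[b] v) : a = b := by
  wlog hlt : a < b generalizing a b
  · rcases (not_lt.1 hlt).eq_or_lt with h | h
    · exact h.symm
    · exact (this hb ha hab.symm h).symm
  -- walking `depth - b` further steps from `t^[a] v` would reach the root too early
  refine absurd ?_ (iterate_ne_of_lt_depth ht (v := v) (k := depth ht v - b + a) (by omega))
  rw [Function.iterate_add_apply, hab, ← Function.iterate_add_apply, Nat.sub_add_cancel hb,
    iterate_depth]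

theorem depth_lt_card [Fintype α] (v : α) : depth ht v < Fintype.card α := by
  have hinj : Function.Injective fun k : Fin (depth ht v + 1) => t^[k] v := fun a b hab =>
    Fin.ext (iterate_inj_of_le_depth ht (Nat.lt_succ_iff.1 a.2) (Nat.lt_succ_iff.1 b.2) hab)
  simpa using Fintype.card_le_of_injective _ hinj

end Depth

section TreePath

variable {n : ℕ} {t : Fin n → Fin n} {r : Fin n} (ht : ∀ v, ∃ k, t^[k] v = r)

theorem treePathAux_eq_iterate (fuel : ℕ) (v : Fin n) (hv : depth ht v ≤ fuel) :
    treePathAux t r fuel v = List.iterate t v (depth ht v + 1) := by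
  induction fuel generalizing v with
  | zero => rw [Nat.le_zero.1 hv]; rfl
  | succ fuel ih =>
    by_cases hvr : v = r
    · rw [treePathAux, if_pos hvr, (depth_eq_zero_iff ht).2 hvr]; rfl
    · rw [treePathAux, if_neg hvr, depth_eq_depth_add_one ht hvr,
        ih (t v) (by rw [depth_eq_depth_add_one ht hvr] at hv; omega)]
      rfl

theorem treePath_eq_iterate (v : Fin n) :
    treePath t r v = List.iterate t v (depth ht v + 1) :=
  treePathAux_eq_iterate ht n v (by simpa using (depth_lt_card ht v).le)

theorem mem_treePath {j v : Fin n} :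
    v ∈ treePath t r j ↔ ∃ k ≤ depth ht j, t^[k] j = v := by
  rw [treePath_eq_iterate ht, List.mem_iterate]
  exact ⟨fun ⟨k, hk, h⟩ => ⟨k, by omega, h.symm⟩,
    fun ⟨k, hk, h⟩ => ⟨k, by omega, h.symm⟩⟩

theorem isPathFrom_treePath {ℓ : Fin n → Fin n → ℝ} (h : IsSpanningTree ℓ r t)
    (v : Fin n) :
    IsPathFrom ℓ v r (treePath t r v) := by
  obtain ⟨-, hedge, ht⟩ := h
  rw [treePath_eq_iterate ht]
  refine ⟨List.isChain_iterate_succ t fun k hk => ?_, rfl, ?_⟩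
  · rw [Function.iterate_succ_apply']
    exact hedge _ (iterate_ne_of_lt_depth ht hk)
  · rw [List.getLast?_iterate_succ, iterate_depth]

theorem pathWeight_iterate_succ (ℓ : Fin n → Fin n → ℝ) (f : Fin n → Fin n) (a : Fin n)
    (m : ℕ) : pathWeight ℓ (List.iterate f a (m + 1)) =
      ∏ k ∈ range m, ℓ (f^[k] a) (f^[k + 1] a) := by
  induction m generalizing a with
  | zero => simp [pathWeight]
  | succ m ih =>
    change ℓ a (f a) * pathWeight ℓ (List.iterate f (f a) (m + 1)) = _
    rw [ih, prod_range_succ', mul_comm]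
    rfl

end TreePath

section ReverseTree

variable {n : ℕ} {t : Fin n → Fin n} {r j : Fin n}

theorem reverseTree_eq (ht : ∀ v, ∃ k, t^[k] v = r) (v : Fin n) : reverseTree t r j v =
    ((List.range (depth ht j)).find? fun k => t^[k + 1] j == v).elim
      (if v = j then j else t v) fun k => t^[k] j := by
  rw [reverseTree, treePath_eq_iterate ht, List.zip_tail_iterate_succ, List.find?_map]
  change (Option.map _ (List.find? (fun k => t^[k + 1] j == v) _)).elim _ _ = _
  cases List.find? (fun k => t^[k + 1] j == v) (List.range (depth ht j)) <;> rfl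

theorem reverseTree_iterate_succ (ht : ∀ v, ∃ k, t^[k] v = r) {k : ℕ}
    (hk : k < depth ht j) :
    reverseTree t r j (t^[k + 1] j) = t^[k] j := by
  rw [reverseTree_eq ht, List.find?_eq_some_of_unique (a := k) (by simpa using hk) (by simp)]
  · rfl
  · intro x hx hpx
    simp only [List.mem_range, beq_iff_eq] at hx hpx
    have := iterate_inj_of_le_depth ht (by omega) (by omega) hpx
    omega

theorem reverseTree_of_forall_ne (ht : ∀ v, ∃ k, t^[k] v = r) {v : Fin n}
    (hv : ∀ k < depth ht j, t^[k + 1] j ≠ v) :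
    reverseTree t r j v = if v = j then j else t v := by
  rw [reverseTree_eq ht, List.find?_eq_none.2 (by simpa using hv)]
  rfl

theorem reverseTree_self (ht : ∀ v, ∃ k, t^[k] v = r) : reverseTree t r j j = j := by
  rw [reverseTree_of_forall_ne ht, if_pos rfl]
  intro k hk h
  have := iterate_inj_of_le_depth ht (a := k + 1) (b := 0) (by omega) (by omega) h
  omega

theorem reverseTree_of_notMem (ht : ∀ v, ∃ k, t^[k] v = r) {v : Fin n}
    (hv : v ∉ treePath t r j) :
    reverseTree t r j v = t v := by
  rw [mem_treePath ht] at hv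
  simp only [not_exists, not_and] at hv
  rw [reverseTree_of_forall_ne ht fun k hk => hv (k + 1) hk,
    if_neg fun h => hv 0 (Nat.zero_le _) h.symm]

theorem root_mem_treePath (ht : ∀ v, ∃ k, t^[k] v = r) : r ∈ treePath t r j :=
  (mem_treePath ht).2 ⟨_, le_rfl, iterate_depth ht j⟩

theorem iterate_reverseTree_iterate (ht : ∀ v, ∃ k, t^[k] v = r) {k : ℕ}
    (hk : k ≤ depth ht j) :
    (reverseTree t r j)^[k] (t^[k] j) = j := by
  induction k with
  | zero => rfl
  | succ k ih =>
    rw [Function.iterate_succ_apply, reverseTree_iterate_succ ht hk, ih (by omega)]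

theorem iterate_reverseTree_root (ht : ∀ v, ∃ k, t^[k] v = r) {k : ℕ}
    (hk : k ≤ depth ht j) :
    (reverseTree t r j)^[k] r = t^[depth ht j - k] j := by
  induction k with
  | zero => rw [Nat.sub_zero, iterate_depth]; rfl
  | succ k ih =>
    have hsucc : depth ht j - k = depth ht j - (k + 1) + 1 := by omega
    rw [Function.iterate_succ_apply', ih (by omega), hsucc,
      reverseTree_iterate_succ ht (by omega)]

theorem reverseTree_reaches (ht : ∀ v, ∃ k, t^[k] v = r) (v : Fin n) :
    ∃ k, (reverseTree t r j)^[k] v = j := by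
  by_cases hv : v ∈ treePath t r j
  · obtain ⟨k, hk, rfl⟩ := (mem_treePath ht).1 hv
    exact ⟨k, iterate_reverseTree_iterate ht hk⟩
  · have hvr : v ≠ r := by rintro rfl; exact hv (root_mem_treePath ht)
    obtain ⟨k, hk⟩ := reverseTree_reaches ht (t v)
    exact ⟨k + 1, by rw [Function.iterate_succ_apply, reverseTree_of_notMem ht hv, hk]⟩
termination_by depth ht v
decreasing_by rw [depth_eq_depth_add_one ht hvr]; omega

theorem reverseTree_edge_pos {ℓ : Fin n → Fin n → ℝ} (hrev : Reversible ℓ)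
    (h : IsSpanningTree ℓ r t) {v : Fin n} (hv : v ≠ j) : 0 < ℓ v (reverseTree t r j v) := by
  obtain ⟨-, hedge, ht⟩ := h
  by_cases hmem : v ∈ treePath t r j
  · obtain ⟨_ | k, hk, rfl⟩ := (mem_treePath ht).1 hmem
    · exact absurd rfl hv
    · rw [reverseTree_iterate_succ ht hk, Function.iterate_succ_apply']
      exact (hrev _ _).1 (hedge _ (iterate_ne_of_lt_depth ht hk))
  · rw [reverseTree_of_notMem ht hmem]
    exact hedge v (by rintro rfl; exact hmem (root_mem_treePath ht))

theorem reverseTree_isSpanningTree {ℓ : Fin n → Fin n → ℝ} (hrev : Reversible ℓ)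
    (h : IsSpanningTree ℓ r t) (j : Fin n) : IsSpanningTree ℓ j (reverseTree t r j) :=
  ⟨reverseTree_self h.2.2, fun _ => reverseTree_edge_pos hrev h, reverseTree_reaches h.2.2⟩

theorem depth_reverseTree (ht : ∀ v, ∃ k, t^[k] v = r) :
    depth (reverseTree_reaches (j := j) ht) r = depth ht j := by
  refine depth_eq_of_iterate _ (by rw [iterate_reverseTree_root ht le_rfl, Nat.sub_self]; rfl)
    fun k hk h => ?_
  rw [iterate_reverseTree_root ht hk.le] at h
  have := iterate_inj_of_le_depth ht (a := depth ht j - k) (b := 0) (by omega) (by omega) h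
  omega

theorem treePath_reverseTree (ht : ∀ v, ∃ k, t^[k] v = r) :
    treePath (reverseTree t r j) j r = (treePath t r j).reverse := by
  rw [treePath_eq_iterate (reverseTree_reaches ht), depth_reverseTree, treePath_eq_iterate ht]
  refine List.ext_getElem (by simp) fun k hk _ => ?_
  simp only [List.length_iterate] at hk
  simp only [List.getElem_iterate, List.getElem_reverse, List.length_iterate]
  rw [iterate_reverseTree_root ht (by omega)]
  congr 1
  omega

theorem reverseTree_reverseTree (ht : ∀ v, ∃ k, t^[k] v = r) (hr : t r = r) :
    reverseTree (reverseTree t r j) j r = t := by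
  have ht' := reverseTree_reaches (j := j) ht
  funext v
  by_cases hv : v ∈ treePath t r j
  · obtain ⟨a, ha, rfl⟩ := (mem_treePath ht).1 hv
    rcases ha.lt_or_eq with ha | rfl
    · have hpath : t^[a] j = (reverseTree t r j)^[depth ht j - 1 - a + 1] r := by
        rw [iterate_reverseTree_root ht (by omega)]
        congr 1
        omega
      calc reverseTree (reverseTree t r j) j r (t^[a] j)
          = (reverseTree t r j)^[depth ht j - 1 - a] r := by
            rw [hpath, reverseTree_iterate_succ ht' (by rw [depth_reverseTree ht]; omega)]
        _ = t^[a + 1] j := by rw [iterate_reverseTree_root ht (by omega)]; congr 1; omega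
        _ = t (t^[a] j) := Function.iterate_succ_apply' t a j
    · rw [iterate_depth, reverseTree_self ht', hr]
  · have hv' : v ∉ treePath (reverseTree t r j) j r := by
      rwa [treePath_reverseTree ht, List.mem_reverse]
    rw [reverseTree_of_notMem ht' hv', reverseTree_of_notMem ht hv]

end ReverseTree

theorem Finset.prod_erase_eq_prod_compl_image_mul {α M : Type*} [Fintype α] [DecidableEq α]
    [CommMonoid M] {u : ℕ → α} {s : Finset ℕ} (hu : Set.InjOn u s) {a : ℕ} (ha : a ∈ s)
    (f : α → M) :
    ∏ v ∈ univ.erase (u a), f v =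
      (∏ v ∈ (s.image u)ᶜ, f v) * ∏ k ∈ s.erase a, f (u k) := by
  have himage : (s.erase a).image u = (s.image u).erase (u a) := by
    ext y
    simp only [mem_image, mem_erase]
    constructor
    · rintro ⟨k, ⟨hka, hk⟩, rfl⟩
      exact ⟨fun h => hka (hu hk ha h), k, hk, rfl⟩
    · rintro ⟨hy, k, hk, rfl⟩
      exact ⟨k, ⟨by rintro rfl; exact hy rfl, hk⟩, rfl⟩
  have hcompl : univ.erase (u a) \ (s.image u).erase (u a) = (s.image u)ᶜ := by
    ext y
    by_cases hy : y = u a <;> simp [hy, mem_image_of_mem u ha]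
  rw [← prod_image (hu.mono (coe_subset.2 (erase_subset a s))), himage, ← hcompl,
    prod_sdiff (erase_subset_erase _ (subset_univ _))]

section TreeWeight

variable {n : ℕ} {t : Fin n → Fin n} {r : Fin n}

theorem treeWeight_reverseTree_mul (ℓ : Fin n → Fin n → ℝ) (ht : ∀ v, ∃ k, t^[k] v = r)
    (j : Fin n) :
    treeWeight ℓ j (reverseTree t r j) * pathWeight ℓ (treePath t r j) =
      treeWeight ℓ r t * pathWeight ℓ (treePath t r j).reverse := by
  set m := depth ht j
  set u : ℕ → Fin n := fun k => t^[k] j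
  have hu : Set.InjOn u (range (m + 1)) := fun a ha b hb hab =>
    iterate_inj_of_le_depth ht (Nat.lt_succ_iff.1 (mem_range.1 ha))
      (Nat.lt_succ_iff.1 (mem_range.1 hb)) hab
  have hoff : ∏ v ∈ ((range (m + 1)).image u)ᶜ, ℓ v (reverseTree t r j v) =
      ∏ v ∈ ((range (m + 1)).image u)ᶜ, ℓ v (t v) := by
    refine prod_congr rfl fun v hv => congrArg _ (reverseTree_of_notMem ht ?_)
    rw [mem_compl, mem_image] at hv
    rw [mem_treePath ht]
    rintro ⟨k, hk, rfl⟩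
    exact hv ⟨k, mem_range.2 (Nat.lt_succ_of_le hk), rfl⟩
  have hnew : ∏ k ∈ (range (m + 1)).erase 0, ℓ (u k) (reverseTree t r j (u k)) =
      ∏ k ∈ range m, ℓ (t^[k + 1] j) (t^[k] j) := by
    rw [range_add_one', erase_insert (by simp), prod_map]
    refine prod_congr rfl fun k hk => ?_
    change ℓ (t^[k + 1] j) (reverseTree t r j (t^[k + 1] j)) = _
    rw [reverseTree_iterate_succ ht (mem_range.1 hk)]
  have hold : ∏ k ∈ (range (m + 1)).erase m, ℓ (u k) (t (u k)) =
      ∏ k ∈ range m, ℓ (t^[k] j) (t^[k + 1] j) := by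
    rw [range_add_one, erase_insert (by simp)]
    exact prod_congr rfl fun k _ => by simp only [u, Function.iterate_succ_apply']
  have hroot : univ.erase r = univ.erase (u m) := congrArg _ (iterate_depth ht j).symm
  have hstart : univ.erase j = univ.erase (u 0) := rfl
  rw [treeWeight, treeWeight, filter_ne', filter_ne', hroot, hstart,
    prod_erase_eq_prod_compl_image_mul hu (by simp),
    prod_erase_eq_prod_compl_image_mul hu (by simp), hoff, hnew, hold, treePath_eq_iterate ht,
    pathWeight_reverse, pathWeight_iterate_succ, pathWeight_iterate_succ]
  ring

end TreeWeight

section TimeReversal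

variable {n : ℕ} {ℓ : Fin n → Fin n → ℝ}

theorem mem_Trees {r : Fin n} {T : Fin n → Fin n} :
    T ∈ Trees ℓ r ↔ IsSpanningTree ℓ r T := by
  simp [Trees]

theorem treeWeight_reverseTree_mul_pathWeight (hrev : Reversible ℓ) (hcc : CycleCondition ℓ)
    {i j : Fin n} {T : Fin n → Fin n} (hT : IsSpanningTree ℓ j T) {Γ : List (Fin n)}
    (hΓ : IsPathFrom ℓ i j Γ) :
    treeWeight ℓ i (reverseTree T j i) * pathWeight ℓ Γ =
      treeWeight ℓ j T * pathWeight ℓ Γ.reverse := by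
  have hP := isPathFrom_treePath hT i
  have htree := treeWeight_reverseTree_mul ℓ hT.2.2 i
  have hcross := pathWeight_mul_pathWeight_reverse_comm hrev hcc hP hΓ
  refine mul_right_cancel₀ (pathWeight_pos (isChain_reverse_of_reversible hrev hP.1)).ne' ?_
  linear_combination pathWeight ℓ Γ.reverse * htree -
    treeWeight ℓ i (reverseTree T j i) * hcross

theorem sum_filter_reverseTree (hrev : Reversible ℓ) (i j : Fin n)
    (p : (Fin n → Fin n) → Prop) [DecidablePred p] (f : (Fin n → Fin n) → ℝ) :
    ∑ T ∈ (Trees ℓ j).filter (fun T => p (reverseTree T j i)), f (reverseTree T j i) =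
      ∑ T ∈ (Trees ℓ i).filter p, f T := by
  refine sum_nbij' (reverseTree · j i) (reverseTree · i j) ?_ ?_ ?_ ?_ fun _ _ => rfl
  · intro T hT
    rw [mem_filter, mem_Trees] at hT ⊢
    exact ⟨reverseTree_isSpanningTree hrev hT.1 i, hT.2⟩
  · intro T hT
    rw [mem_filter, mem_Trees] at hT ⊢
    rw [reverseTree_reverseTree hT.1.2.2 hT.1.1]
    exact ⟨reverseTree_isSpanningTree hrev hT.1 j, hT.2⟩
  · intro T hT
    rw [mem_filter, mem_Trees] at hT
    exact reverseTree_reverseTree hT.1.2.2 hT.1.1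
  · intro T hT
    rw [mem_filter, mem_Trees] at hT
    exact reverseTree_reverseTree hT.1.2.2 hT.1.1

end TimeReversal

theorem equilibrium_time_reversal_general {n : ℕ} (ℓ : Fin n → Fin n → ℝ)
    (hrev : Reversible ℓ)
    (hcc : CycleCondition ℓ) (i j : Fin n) (Γ : List (Fin n))
    (hΓ : IsMinPathFrom ℓ i j Γ) :
    (∑ T ∈ (Trees ℓ j).filter (fun T => treePath T j i = Γ),
        treeWeight ℓ j T) / (∑ T ∈ Trees ℓ j, treeWeight ℓ j T) =
      (∑ T' ∈ (Trees ℓ i).filter (fun T' => treePath T' i j = Γ.reverse),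
          treeWeight ℓ i T') / (∑ T' ∈ Trees ℓ i, treeWeight ℓ i T') := by
  set c := pathWeight ℓ Γ.reverse / pathWeight ℓ Γ
  have hΓpos := pathWeight_pos hΓ.1.1
  have hc : c ≠ 0 :=
    (div_pos (pathWeight_pos (isChain_reverse_of_reversible hrev hΓ.1.1)) hΓpos).ne'
  have hscale :
      ∀ T ∈ Trees ℓ j, treeWeight ℓ i (reverseTree T j i) = c * treeWeight ℓ j T := by
    intro T hT
    rw [div_mul_eq_mul_div, eq_div_iff hΓpos.ne', mul_comm (pathWeight ℓ _)]
    exact treeWeight_reverseTree_mul_pathWeight hrev hcc (mem_Trees.1 hT) hΓ.1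
  have hnum : ∑ T' ∈ (Trees ℓ i).filter (fun T' => treePath T' i j = Γ.reverse),
      treeWeight ℓ i T' = c * ∑ T ∈ (Trees ℓ j).filter (fun T => treePath T j i = Γ),
        treeWeight ℓ j T := by
    rw [← sum_filter_reverseTree hrev i j, mul_sum]
    refine sum_congr (filter_congr fun T hT => ?_) fun T hT => hscale T (mem_filter.1 hT).1
    rw [treePath_reverseTree (mem_Trees.1 hT).2.2, List.reverse_inj]
  have hden : ∑ T ∈ Trees ℓ i, treeWeight ℓ i T =
      c * ∑ T ∈ Trees ℓ j, treeWeight ℓ j T := by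
    rw [mul_sum, ← sum_congr rfl hscale]
    simpa using (sum_filter_reverseTree hrev i j (fun _ => True) (treeWeight ℓ i)).symm
  rw [hnum, hden, mul_div_mul_left _ _ hc]

/-- Equilibrium time-reversal symmetry of loop-erased path probabilities: under
the cycle condition, `Pr(Γ) = Pr(Γ̂)` for every minimal path `Γ` from `i` to
`j`, where `Γ̂` is the reversed path. -/
theorem equilibrium_time_reversal {n : ℕ} (ℓ : Fin n → Fin n → ℝ)
    (hℓ : ∀ i j, 0 ≤ ℓ i j) (hsc : StronglyConnected ℓ) (hrev : Reversible ℓ)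
    (hcc : CycleCondition ℓ) (i j : Fin n) (Γ : List (Fin n))
    (hΓ : IsMinPathFrom ℓ i j Γ) :
    (∑ T ∈ (Trees ℓ j).filter (fun T => treePath T j i = Γ),
        treeWeight ℓ j T) / (∑ T ∈ Trees ℓ j, treeWeight ℓ j T) =
      (∑ T' ∈ (Trees ℓ i).filter (fun T' => treePath T' i j = Γ.reverse),
          treeWeight ℓ i T') / (∑ T' ∈ Trees ℓ i, treeWeight ℓ i T') :=
  equilibrium_time_reversal_general ℓ hrev hcc i j Γ hΓ
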